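/- Let (Ω, P) be a probability space and I: Ω → [0, ∞) a measurable random variable. Define h(ℓ) = 2ℓ²·E[Φ(−ℓ·√I/2)] for ℓ > 0. If ℓ̂ ∈ (0, ∞) satisfies h(ℓ̂) ≥ h(ℓ) for all ℓ > 0, then the first-order stationarity condition holds: 2·E[Φ(−ℓ̂·√I/2)] = E[(ℓ̂·√I/2)·φ(ℓ̂·√I/2)]. -/

import Mathlib

/-!
With `X = √I / 2` and `g ℓ = E[Φ(-ℓ X)]`, the bound `|x| φ(x) ≤ 1` dominates `X φ(ℓ X)` by `2 / |ℓ̂|`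
near `ℓ̂ ≠ 0`, so `g` may be differentiated under the expectation: `g' ℓ = -E[X φ(ℓ X)]`.
At the interior maximum `ℓ̂` the derivative `2 ℓ̂ (2 g ℓ̂ + ℓ̂ g' ℓ̂)` of `2 ℓ² g ℓ` vanishes.
-/

open MeasureTheory

/-- The standard normal cumulative distribution function
`Φ(x) = ∫_{−∞}^x (2π)^{−1/2} e^{−t²/2} dt`. -/
noncomputable def Phi (x : ℝ) : ℝ :=
  ∫ t in Set.Iic x, (Real.sqrt (2 * Real.pi))⁻¹ * Real.exp (-t ^ 2 / 2)

/-- The standard normal density `φ(x) = (2π)^{−1/2} e^{−x²/2}`. -/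
noncomputable def phi (x : ℝ) : ℝ :=
  (Real.sqrt (2 * Real.pi))⁻¹ * Real.exp (-x ^ 2 / 2)

open ProbabilityTheory

lemma phi_eq_gaussianPDFReal : phi = gaussianPDFReal 0 1 := by
  ext x
  simp [phi, gaussianPDFReal]

lemma integrable_phi : Integrable phi :=
  phi_eq_gaussianPDFReal ▸ integrable_gaussianPDFReal 0 1

lemma integral_phi : ∫ x, phi x = 1 :=
  phi_eq_gaussianPDFReal ▸ integral_gaussianPDFReal_eq_one 0 one_ne_zero

lemma continuous_phi : Continuous phi := by
  unfold phi
  fun_prop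

lemma phi_nonneg (x : ℝ) : 0 ≤ phi x := by
  unfold phi
  positivity

lemma phi_neg (x : ℝ) : phi (-x) = phi x := by
  simp [phi]

lemma abs_mul_phi_le_one (x : ℝ) : |x| * phi x ≤ 1 := by
  have hx : |x| ≤ Real.exp (x ^ 2 / 2) := by
    nlinarith [Real.add_one_le_exp (x ^ 2 / 2), sq_nonneg (|x| - 1), sq_abs x]
  have hc : (Real.sqrt (2 * Real.pi))⁻¹ ≤ 1 :=
    inv_le_one_of_one_le₀ (Real.one_le_sqrt.2 (by linarith [Real.pi_gt_three]))
  calc |x| * phi x ≤ Real.exp (x ^ 2 / 2) * (1 * Real.exp (-x ^ 2 / 2)) := by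
        unfold phi
        gcongr
    _ = 1 := by
        rw [one_mul, ← Real.exp_add, neg_div, add_neg_cancel, Real.exp_zero]

lemma abs_mul_phi_mul_le {a x : ℝ} (ha : 0 < a) (hx : a ≤ |x|) (y : ℝ) :
    |y| * phi (x * y) ≤ 1 / a := by
  rw [le_div_iff₀ ha]
  calc |y| * phi (x * y) * a ≤ |x * y| * phi (x * y) := by
        rw [abs_mul]
        nlinarith [mul_nonneg (abs_nonneg y) (phi_nonneg (x * y))]
    _ ≤ 1 := abs_mul_phi_le_one _

lemma Phi_eq_setIntegral_phi (x : ℝ) : Phi x = ∫ t in Set.Iic x, phi t := rfl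

lemma Phi_nonneg (x : ℝ) : 0 ≤ Phi x :=
  setIntegral_nonneg measurableSet_Iic fun t _ => phi_nonneg t

lemma Phi_le_one (x : ℝ) : Phi x ≤ 1 :=
  integral_phi ▸ setIntegral_le_integral integrable_phi (ae_of_all _ phi_nonneg)

lemma hasDerivAt_Phi (x : ℝ) : HasDerivAt Phi (phi x) x := by
  have hPhi : (fun y => Phi 0 + ∫ t in (0 : ℝ)..y, phi t) = Phi := by
    ext y
    rw [← intervalIntegral.integral_Iic_sub_Iic integrable_phi.integrableOn
      integrable_phi.integrableOn, Phi_eq_setIntegral_phi, Phi_eq_setIntegral_phi]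
    ring
  exact hPhi ▸ (continuous_phi.integral_hasStrictDerivAt 0 x).hasDerivAt.const_add _

lemma continuous_Phi : Continuous Phi :=
  continuous_iff_continuousAt.2 fun x => (hasDerivAt_Phi x).continuousAt

lemma hasDerivAt_Phi_neg_mul (a ℓ : ℝ) :
    HasDerivAt (fun ℓ => Phi (-(ℓ * a))) (-(a * phi (ℓ * a))) ℓ := by
  refine ((hasDerivAt_Phi (-(ℓ * a))).comp ℓ ((hasDerivAt_id ℓ).mul_const a).neg).congr_deriv ?_
  rw [phi_neg]
  ring

lemma hasDerivAt_integral_Phi_neg_mul {Ω : Type*} [MeasurableSpace Ω] {μ : Measure Ω}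
    [IsFiniteMeasure μ] {X : Ω → ℝ} (hX : AEMeasurable X μ) {ℓ : ℝ} (hℓ : ℓ ≠ 0) :
    HasDerivAt (fun ℓ => ∫ ω, Phi (-(ℓ * X ω)) ∂μ) (-∫ ω, X ω * phi (ℓ * X ω) ∂μ) ℓ := by
  have hmeas : ∀ ℓ', AEStronglyMeasurable (fun ω => Phi (-(ℓ' * X ω))) μ := fun ℓ' =>
    (continuous_Phi.measurable.comp_aemeasurable (hX.const_mul ℓ').neg).aestronglyMeasurable
  have hint : Integrable (fun ω => Phi (-(ℓ * X ω))) μ :=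
    (integrable_const 1).mono' (hmeas ℓ) <| ae_of_all _ fun ω => by
      rw [Real.norm_eq_abs, abs_le]
      exact ⟨by linarith [Phi_nonneg (-(ℓ * X ω))], Phi_le_one _⟩
  have hbound : ∀ ω, ∀ ℓ' ∈ Metric.ball ℓ (|ℓ| / 2),
      ‖-(X ω * phi (ℓ' * X ω))‖ ≤ 1 / (|ℓ| / 2) := by
    intro ω ℓ' hℓ'
    have hlow : |ℓ| / 2 ≤ |ℓ'| := by
      rw [Metric.mem_ball, Real.dist_eq] at hℓ'
      linarith [abs_sub_abs_le_abs_sub ℓ ℓ', abs_sub_comm ℓ ℓ']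
    rw [norm_neg, norm_mul, Real.norm_eq_abs, Real.norm_of_nonneg (phi_nonneg _)]
    exact abs_mul_phi_mul_le (by positivity) hlow _
  have hderiv := (hasDerivAt_integral_of_dominated_loc_of_deriv_le
    (Metric.ball_mem_nhds ℓ (by positivity)) (.of_forall hmeas) hint
    (hX.mul (continuous_phi.measurable.comp_aemeasurable (hX.const_mul ℓ))).neg.aestronglyMeasurable
    (ae_of_all _ hbound) (integrable_const _)
    (ae_of_all _ fun ω ℓ' _ => hasDerivAt_Phi_neg_mul (X ω) ℓ')).2
  rwa [integral_neg] at hderiv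

lemma two_mul_eq_neg_mul_of_isLocalMax_sq_mul {g : ℝ → ℝ} {a g' : ℝ}
    (hmax : IsLocalMax (fun ℓ => ℓ ^ 2 * g ℓ) a) (hg : HasDerivAt g g' a) (ha : a ≠ 0) :
    2 * g a = -(a * g') := by
  have hcrit := hmax.hasDerivAt_eq_zero ((hasDerivAt_pow 2 a).mul hg)
  have : a * (2 * g a + a * g') = 0 := by
    push_cast at hcrit
    linear_combination hcrit
  linear_combination (mul_eq_zero.1 this).resolve_left ha

theorem first_order_condition_of_maximizer_general
    {Ω : Type*} [MeasurableSpace Ω] (P : Measure Ω) [IsProbabilityMeasure P]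
    (I : Ω → ℝ) (hIme : Measurable I)
    (lhat : ℝ) (hlhat : 0 < lhat)
    (hmax : ∀ ℓ : ℝ, 0 < ℓ →
      2 * ℓ ^ 2 * ∫ ω, Phi (-(ℓ * Real.sqrt (I ω)) / 2) ∂P ≤
        2 * lhat ^ 2 * ∫ ω, Phi (-(lhat * Real.sqrt (I ω)) / 2) ∂P) :
    2 * ∫ ω, Phi (-(lhat * Real.sqrt (I ω)) / 2) ∂P =
      ∫ ω, (lhat * Real.sqrt (I ω) / 2) * phi (lhat * Real.sqrt (I ω) / 2) ∂P := by
  have harg : ∀ ℓ ω, -(ℓ * Real.sqrt (I ω)) / 2 = -(ℓ * (Real.sqrt (I ω) / 2)) :=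
    fun ℓ ω => by ring
  simp_rw [harg, mul_div_assoc] at hmax ⊢
  have hlocal :
      IsLocalMax (fun ℓ => ℓ ^ 2 * ∫ ω, Phi (-(ℓ * (Real.sqrt (I ω) / 2))) ∂P) lhat :=
    Filter.eventually_of_mem (Ioi_mem_nhds hlhat) fun ℓ hℓ => by linarith [hmax ℓ hℓ]
  have hX : Measurable fun ω => Real.sqrt (I ω) / 2 := hIme.sqrt.div_const 2
  have hfoc := two_mul_eq_neg_mul_of_isLocalMax_sq_mul hlocal
    (hasDerivAt_integral_Phi_neg_mul hX.aemeasurable hlhat.ne') hlhat.ne'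
  rw [hfoc, mul_neg, neg_neg, ← integral_const_mul]
  simp_rw [mul_assoc]

/-- Let `(Ω, P)` be a probability space and `I : Ω → [0, ∞)` measurable.
Define `h(ℓ) = 2ℓ²·E[Φ(−ℓ·√I/2)]` for `ℓ > 0`. If `ℓ̂ ∈ (0, ∞)` maximizes `h` over `(0, ∞)`,
then the first-order stationarity condition holds:
`2·E[Φ(−ℓ̂·√I/2)] = E[(ℓ̂·√I/2)·φ(ℓ̂·√I/2)]`. -/
theorem first_order_condition_of_maximizer
    {Ω : Type*} [MeasurableSpace Ω] (P : Measure Ω) [IsProbabilityMeasure P]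
    (I : Ω → ℝ) (hIme : Measurable I) (hInn : ∀ ω, 0 ≤ I ω)
    (lhat : ℝ) (hlhat : 0 < lhat)
    (hmax : ∀ ℓ : ℝ, 0 < ℓ →
      2 * ℓ ^ 2 * ∫ ω, Phi (-(ℓ * Real.sqrt (I ω)) / 2) ∂P ≤
        2 * lhat ^ 2 * ∫ ω, Phi (-(lhat * Real.sqrt (I ω)) / 2) ∂P) :
    2 * ∫ ω, Phi (-(lhat * Real.sqrt (I ω)) / 2) ∂P =
      ∫ ω, (lhat * Real.sqrt (I ω) / 2) * phi (lhat * Real.sqrt (I ω) / 2) ∂P :=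
  first_order_condition_of_maximizer_general P I hIme lhat hlhat hmax
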